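/- arXiv:0705.4590 — 4 statements merged into one kernel-verified Lean document; each statement's English description precedes it below -/
import Mathlib

section
/- Let C be an irreducible plane curve over an algebraically closed field K of characteristic zero, A ∈ K², d ∈ K*, and let B(C,A,d) ⊂ K²×K²×K be the incidence variety defined by f(y) = 0, (x₁-y₁)² + (x₂-y₂)² = d², (y₂-b)(x₁-y₁) - (y₁-a)(x₂-y₂) = 0, and w·((y₁-a)² + (y₂-b)²) = 1. If C is not the circle centered at A of radius d, then the projection π₁(x,y,w) = x has fibers of cardinality at most 2 over every point of π₁(B(C,A,d)) different from A. -/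
/-!
A point `y` of the fiber over `x ≠ A` lies on the line through `A` and `x`, so `y = A + t (x - A)`,
and the circle condition reads `‖x - A‖² (1 - t)² = d²`. The key point is that `x - A` is itself
non-isotropic, being a nonzero multiple of the non-isotropic vector `y - A`; hence this is a genuine
quadratic in `t`, and it has at most two roots. The last coordinate `w` is forced to be `‖y - A‖⁻²`.
-/

open MvPolynomial Set

noncomputable section

/-- Zariski closure of a subset of affine n-space over K. -/
def zarClosure (K : Type*) [Field K] (n : ℕ) (S : Set (Fin n → K)) : Set (Fin n → K) :=
  {x | ∀ p : MvPolynomial (Fin n) K, (∀ s ∈ S, eval s p = 0) → eval x p = 0}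

/-- The Zariski topology on affine n-space over K. -/
instance zariskiTop (K : Type*) [Field K] (n : ℕ) : TopologicalSpace (Fin n → K) :=
  TopologicalSpace.generateFrom
    {U | ∃ p : MvPolynomial (Fin n) K, U = {x | eval x p ≠ 0}}

/-- The affine plane curve defined by a bivariate polynomial. -/
def curveOf {K : Type*} [Field K] (f : MvPolynomial (Fin 2) K) : Set (Fin 2 → K) :=
  {y | eval y f = 0}

/-- Squared distance (w.r.t. the bilinear form x₁y₁+x₂y₂) between P and A. -/
def nSq {K : Type*} [Field K] (A P : Fin 2 → K) : K :=
  (P 0 - A 0) ^ 2 + (P 1 - A 1) ^ 2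

/-- The non-isotropic locus C₀ of a set C relative to the focus A. -/
def nonIso {K : Type*} [Field K] (C : Set (Fin 2 → K)) (A : Fin 2 → K) : Set (Fin 2 → K) :=
  {P ∈ C | nSq A P ≠ 0}

/-- The incidence variety B(C,A,d) ⊆ K² × K² × K. -/
def Inc {K : Type*} [Field K] (C : Set (Fin 2 → K)) (A : Fin 2 → K) (d : K) :
    Set ((Fin 2 → K) × (Fin 2 → K) × K) :=
  {q | q.2.1 ∈ C ∧
    (q.1 0 - q.2.1 0) ^ 2 + (q.1 1 - q.2.1 1) ^ 2 = d ^ 2 ∧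
    (q.2.1 1 - A 1) * (q.1 0 - q.2.1 0) - (q.2.1 0 - A 0) * (q.1 1 - q.2.1 1) = 0 ∧
    q.2.2 * nSq A q.2.1 = 1}

/-- The conchoid of C from focus A at distance d: the Zariski closure of π₁(B(C,A,d)). -/
def conchoid {K : Type*} [Field K] (C : Set (Fin 2 → K)) (A : Fin 2 → K) (d : K) :
    Set (Fin 2 → K) :=
  zarClosure K 2 ((fun q => q.1) '' Inc C A d)

/-- M is an irreducible component of S (w.r.t. the Zariski topology). -/
def IsCompOf {K : Type*} [Field K] {n : ℕ} (M S : Set (Fin n → K)) : Prop :=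
  IsIrreducible M ∧ IsClosed M ∧ M ⊆ S ∧
    ∀ M' : Set (Fin n → K), IsIrreducible M' → M' ⊆ S → M ⊆ M' → M' = M

/-- The circle centered at A of radius r. -/
def circleAt {K : Type*} [Field K] (A : Fin 2 → K) (r : K) : Set (Fin 2 → K) :=
  {y | nSq A y = r ^ 2}

/-- C is a line through the point A. -/
def IsLineThrough {K : Type*} [Field K] (C : Set (Fin 2 → K)) (A : Fin 2 → K) : Prop :=
  ∃ l m : K, ¬(l = 0 ∧ m = 0) ∧ C = {y | l * (y 0 - A 0) + m * (y 1 - A 1) = 0}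

/-- The set of base points of C generating a point Q of the conchoid. -/
def gens {K : Type*} [Field K] (C : Set (Fin 2 → K)) (A : Fin 2 → K) (d : K)
    (Q : Fin 2 → K) : Set (Fin 2 → K) :=
  (fun q => q.2.1) '' {q ∈ Inc C A d | q.1 = Q}

/-- A component M of the conchoid of C is simple if generically each of its points
is generated by exactly one point of C. -/
def IsSimpleComp {K : Type*} [Field K] (C : Set (Fin 2 → K)) (A : Fin 2 → K) (d : K)
    (M : Set (Fin 2 → K)) : Prop :=
  ∃ Ω : Set (Fin 2 → K), Ω.Nonempty ∧ Ω ⊆ M ∧ M ⊆ closure Ω ∧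
    ∀ Q ∈ Ω, (gens C A d Q).ncard = 1

/-- A component M of the conchoid of C is special if generically each of its points
is generated by more than one point of C. -/
def IsSpecialComp {K : Type*} [Field K] (C : Set (Fin 2 → K)) (A : Fin 2 → K) (d : K)
    (M : Set (Fin 2 → K)) : Prop :=
  ∃ Ω : Set (Fin 2 → K), Ω.Nonempty ∧ Ω ⊆ M ∧ M ⊆ closure Ω ∧
    ∀ Q ∈ Ω, 1 < (gens C A d Q).ncard

end

lemma quadratic_roots_finite_and_ncard_le_two {K : Type*} [Field K] {a : K} (b c : K)
    (ha : a ≠ 0) :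
    {s : K | a * s ^ 2 + b * s + c = 0}.Finite ∧
      {s : K | a * s ^ 2 + b * s + c = 0}.ncard ≤ 2 := by
  classical
  set p : Polynomial K :=
    Polynomial.C a * Polynomial.X ^ 2 + Polynomial.C b * Polynomial.X + Polynomial.C c
  have hdeg : p.natDegree = 2 := Polynomial.natDegree_quadratic ha
  have hp : p ≠ 0 := Polynomial.ne_zero_of_natDegree_gt (n := 0) (by omega)
  have hroots : {s : K | a * s ^ 2 + b * s + c = 0} = ↑p.roots.toFinset := by
    ext s
    simp [p, Polynomial.mem_roots hp]
  rw [hroots, ncard_coe_finset]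
  exact ⟨Finset.finite_toSet _, (Multiset.toFinset_card_le _).trans (hdeg ▸ p.card_roots')⟩

section Plane

variable {K : Type*} [Field K]

lemma sq_add_sq_ne_zero_of_cross_eq_zero {u₀ u₁ v₀ v₁ : K} (hu : u₀ ^ 2 + u₁ ^ 2 ≠ 0)
    (hcross : u₁ * v₀ - u₀ * v₁ = 0) (hv : v₀ ≠ 0 ∨ v₁ ≠ 0) : v₀ ^ 2 + v₁ ^ 2 ≠ 0 := by
  intro hv0
  -- Lagrange's identity `(u·v)² + (u × v)² = ‖u‖² ‖v‖²` forces `u·v = 0`.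
  have hdot : u₀ * v₀ + u₁ * v₁ = 0 := by
    refine pow_eq_zero_iff two_ne_zero |>.1 ?_
    linear_combination (u₀ ^ 2 + u₁ ^ 2) * hv0 - (u₁ * v₀ - u₀ * v₁) * hcross
  have h₀ : (u₀ ^ 2 + u₁ ^ 2) * v₀ = 0 := by linear_combination u₀ * hdot + u₁ * hcross
  have h₁ : (u₀ ^ 2 + u₁ ^ 2) * v₁ = 0 := by linear_combination u₁ * hdot - u₀ * hcross
  rcases hv with hv | hv
  · exact hv ((mul_eq_zero.1 h₀).resolve_left hu)
  · exact hv ((mul_eq_zero.1 h₁).resolve_left hu)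

lemma exists_eq_mul_of_cross_eq_zero {u₀ u₁ v₀ v₁ : K} (hv : v₀ ^ 2 + v₁ ^ 2 ≠ 0)
    (hcross : u₁ * v₀ - u₀ * v₁ = 0) : ∃ t, u₀ = t * v₀ ∧ u₁ = t * v₁ := by
  refine ⟨(u₀ * v₀ + u₁ * v₁) / (v₀ ^ 2 + v₁ ^ 2), ?_, ?_⟩
  · rw [div_mul_eq_mul_div, eq_div_iff hv]
    linear_combination (-v₁) * hcross
  · rw [div_mul_eq_mul_div, eq_div_iff hv]
    linear_combination v₀ * hcross

variable {C : Set (Fin 2 → K)} {A : Fin 2 → K} {d : K}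

lemma nSq_ne_zero_of_mem_Inc {x y : Fin 2 → K} {w : K} (hq : (x, y, w) ∈ Inc C A d)
    (hxA : x ≠ A) : nSq A x ≠ 0 := by
  obtain ⟨-, -, hcross, hw⟩ := hq
  have hy : nSq A y ≠ 0 := right_ne_zero_of_mul_eq_one hw
  obtain ⟨i, hi⟩ := Function.ne_iff.1 hxA
  have hv : x 0 - A 0 ≠ 0 ∨ x 1 - A 1 ≠ 0 := by
    fin_cases i
    · exact Or.inl (sub_ne_zero.2 hi)
    · exact Or.inr (sub_ne_zero.2 hi)
  exact sq_add_sq_ne_zero_of_cross_eq_zero hy (by linear_combination hcross) hv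

lemma exists_param_of_mem_Inc {x y : Fin 2 → K} {w : K} (hq : (x, y, w) ∈ Inc C A d)
    (hx : nSq A x ≠ 0) :
    ∃ t, nSq A x * t ^ 2 + (-2 * nSq A x) * t + (nSq A x - d ^ 2) = 0 ∧
      (x, y, w) = (x, A + t • (x - A), (nSq A (A + t • (x - A)))⁻¹) := by
  obtain ⟨-, hcirc, hcross, hw⟩ := hq
  obtain ⟨t, h₀, h₁⟩ := exists_eq_mul_of_cross_eq_zero (u₀ := y 0 - A 0) (u₁ := y 1 - A 1) hx
    (by linear_combination hcross)
  have hy : y = A + t • (x - A) := by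
    funext i
    fin_cases i
    · show y 0 = A 0 + t * (x 0 - A 0)
      linear_combination h₀
    · show y 1 = A 1 + t * (x 1 - A 1)
      linear_combination h₁
  have e₀ : x 0 - y 0 = (1 - t) * (x 0 - A 0) := by linear_combination -h₀
  have e₁ : x 1 - y 1 = (1 - t) * (x 1 - A 1) := by linear_combination -h₁
  refine ⟨t, ?_, ?_⟩
  · change (x 0 - y 0) ^ 2 + (x 1 - y 1) ^ 2 = d ^ 2 at hcirc
    rw [e₀, e₁] at hcirc
    unfold nSq
    linear_combination hcirc
  · rw [← hy, eq_inv_of_mul_eq_one_left (show w * nSq A y = 1 from hw)]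

end Plane

theorem stmt4_general {K : Type*} [Field K]
    (f : MvPolynomial (Fin 2) K)
    (A : Fin 2 → K) (d : K) :
    ∀ x ∈ (fun q => q.1) '' Inc (curveOf f) A d, x ≠ A →
      ({q ∈ Inc (curveOf f) A d | q.1 = x}).Finite ∧
      ({q ∈ Inc (curveOf f) A d | q.1 = x}).ncard ≤ 2 := by
  rintro x ⟨⟨x', y, w⟩, hq, rfl⟩ hxA
  have hx := nSq_ne_zero_of_mem_Inc hq hxA
  obtain ⟨hfin, hcard⟩ :=
    quadratic_roots_finite_and_ncard_le_two (-2 * nSq A x') (nSq A x' - d ^ 2) hx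
  have hsub : {q ∈ Inc (curveOf f) A d | q.1 = x'} ⊆
      (fun t : K => (x', A + t • (x' - A), (nSq A (A + t • (x' - A)))⁻¹)) ''
        {t | nSq A x' * t ^ 2 + (-2 * nSq A x') * t + (nSq A x' - d ^ 2) = 0} := by
    rintro ⟨_, y', w'⟩ ⟨hq', rfl⟩
    obtain ⟨t, ht, heq⟩ := exists_param_of_mem_Inc hq' hx
    exact ⟨t, ht, heq.symm⟩
  exact ⟨(hfin.image _).subset hsub,
    (ncard_le_ncard hsub (hfin.image _)).trans (ncard_image_le hfin |>.trans hcard)⟩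

theorem stmt4 {K : Type*} [Field K] [IsAlgClosed K] [CharZero K]
    (f : MvPolynomial (Fin 2) K) (hf : Irreducible f)
    (A : Fin 2 → K) (d : K) (hd : d ≠ 0)
    (hC : curveOf f ≠ circleAt A d) :
    ∀ x ∈ (fun q => q.1) '' Inc (curveOf f) A d, x ≠ A →
      ({q ∈ Inc (curveOf f) A d | q.1 = x}).Finite ∧
      ({q ∈ Inc (curveOf f) A d | q.1 = x}).ncard ≤ 2 :=
  stmt4_general f A d
end

section
/- If C is the circle centered at the focus A of radius d, then the conchoid C(C,A,d) is the union of the singleton {A} and the circle centered at A of radius 2d. -/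
open MvPolynomial Set

/-! For `u = y - A` and `v = x - y` with `‖u‖² = ‖v‖² = d²` and `u, v` parallel, Lagrange's identity
`(u·v)² + (u×v)² = ‖u‖²‖v‖²` forces `u·v = ±d²`: if `u·v = d²` then `v = u` and `x` lies on the
circle of radius `2d` about `A`, and if `u·v = -d²` then `v = -u` and `x = A`. Conversely `A` and
every point of that circle arise this way, and `{A} ∪ circleAt A (2d)` is cut out by the
polynomials `(Xᵢ - Aᵢ) · (‖X - A‖² - 4d²)`, so it is its own Zariski closure. -/

section ZariskiClosure

variable {K : Type*} [Field K] {n : ℕ}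

theorem subset_zarClosure (S : Set (Fin n → K)) : S ⊆ zarClosure K n S :=
  fun x hx _ hp => hp x hx

theorem zarClosure_setOf_forall_eval_eq_zero (P : Set (MvPolynomial (Fin n) K)) :
    zarClosure K n {x | ∀ p ∈ P, eval x p = 0} = {x | ∀ p ∈ P, eval x p = 0} :=
  (subset_zarClosure _).antisymm' fun _ hx p hp => hx p fun _ hs => hs p hp

end ZariskiClosure

section Circle

variable {K : Type*} [Field K]

noncomputable def circlePoly (A : Fin 2 → K) (r : K) : MvPolynomial (Fin 2) K :=
  (X 0 - C (A 0)) ^ 2 + (X 1 - C (A 1)) ^ 2 - C (r ^ 2)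

theorem eval_circlePoly (A x : Fin 2 → K) (r : K) :
    eval x (circlePoly A r) = nSq A x - r ^ 2 := by
  simp only [circlePoly, nSq, map_sub, map_add, map_pow, eval_X, eval_C]

theorem singleton_union_circleAt_eq_setOf (A : Fin 2 → K) (r : K) :
    {A} ∪ circleAt A r =
      {x | ∀ p ∈ range fun i => (X i - C (A i)) * circlePoly A r, eval x p = 0} := by
  ext x
  simp only [mem_union, mem_singleton_iff, circleAt, mem_ofPred_eq, forall_mem_range, map_mul,
    map_sub, eval_X, eval_C, eval_circlePoly, mul_eq_zero, sub_eq_zero]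
  constructor
  · rintro (rfl | hx) i
    exacts [Or.inl rfl, Or.inr hx]
  · intro h
    by_cases hx : nSq A x = r ^ 2
    · exact Or.inr hx
    · exact Or.inl (funext fun i => (h i).resolve_right hx)

theorem zarClosure_singleton_union_circleAt (A : Fin 2 → K) (r : K) :
    zarClosure K 2 ({A} ∪ circleAt A r) = {A} ∪ circleAt A r := by
  rw [singleton_union_circleAt_eq_setOf, zarClosure_setOf_forall_eval_eq_zero]

variable {A : Fin 2 → K} {d : K}

theorem eq_or_mem_circleAt_of_mem_inc (hd : d ≠ 0) {q : (Fin 2 → K) × (Fin 2 → K) × K}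
    (hq : q ∈ Inc (circleAt A d) A d) : q.1 = A ∨ q.1 ∈ circleAt A (2 * d) := by
  obtain ⟨x, y, t⟩ := q
  obtain ⟨hy, hxy, hpar, -⟩ := hq
  change (y 0 - A 0) ^ 2 + (y 1 - A 1) ^ 2 = d ^ 2 at hy
  dsimp only at hxy hpar ⊢
  set dot := (y 0 - A 0) * (x 0 - y 0) + (y 1 - A 1) * (x 1 - y 1)
  have hdot : (dot - d ^ 2) * (dot + d ^ 2) = 0 := by
    linear_combination ((x 0 - y 0) ^ 2 + (x 1 - y 1) ^ 2) * hy + d ^ 2 * hxy -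
      ((y 1 - A 1) * (x 0 - y 0) - (y 0 - A 0) * (x 1 - y 1)) * hpar
  rcases mul_eq_zero.mp hdot with hdot | hdot
  · right
    show (x 0 - A 0) ^ 2 + (x 1 - A 1) ^ 2 = (2 * d) ^ 2
    linear_combination hy + hxy + 2 * hdot
  · left
    have hd2 : d ^ 2 ≠ 0 := pow_ne_zero 2 hd
    have h0 : d ^ 2 * (x 0 - A 0) = 0 := by
      linear_combination (y 0 - A 0) * hdot + (y 1 - A 1) * hpar - (x 0 - y 0) * hy
    have h1 : d ^ 2 * (x 1 - A 1) = 0 := by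
      linear_combination (y 1 - A 1) * hdot - (y 0 - A 0) * hpar - (x 1 - y 1) * hy
    ext i
    fin_cases i
    exacts [sub_eq_zero.mp ((mul_eq_zero.mp h0).resolve_left hd2),
      sub_eq_zero.mp ((mul_eq_zero.mp h1).resolve_left hd2)]

theorem mem_image_inc_self (hd : d ≠ 0) :
    A ∈ (fun q => q.1) '' Inc (circleAt A d) A d := by
  have hy : nSq A ![A 0 + d, A 1] = d ^ 2 := by simp [nSq]
  refine ⟨(A, ![A 0 + d, A 1], (d ^ 2)⁻¹), ⟨hy, ?_, ?_, ?_⟩, rfl⟩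
  · simp
  · simp
  · rw [hy]
    exact inv_mul_cancel₀ (pow_ne_zero 2 hd)

theorem mem_image_inc_of_mem_circleAt (h2 : (2 : K) ≠ 0) (hd : d ≠ 0) {x : Fin 2 → K}
    (hx : x ∈ circleAt A (2 * d)) : x ∈ (fun q => q.1) '' Inc (circleAt A d) A d := by
  change (x 0 - A 0) ^ 2 + (x 1 - A 1) ^ 2 = (2 * d) ^ 2 at hx
  obtain ⟨h, hh⟩ : ∃ h : K, 2 * h = 1 := ⟨2⁻¹, mul_inv_cancel₀ h2⟩
  -- the generating point is the midpoint of `A` and `x`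
  set y : Fin 2 → K := fun i => A i + h * (x i - A i)
  have hy : nSq A y = d ^ 2 := by
    simp only [nSq, y]
    linear_combination h ^ 2 * hx + (2 * h + 1) * d ^ 2 * hh
  refine ⟨(x, y, (d ^ 2)⁻¹), ⟨hy, ?_, ?_, ?_⟩, rfl⟩
  · simp only [y]
    linear_combination (1 - h) ^ 2 * hx + (2 * h - 3) * d ^ 2 * hh
  · simp only [y]
    ring
  · rw [hy]
    exact inv_mul_cancel₀ (pow_ne_zero 2 hd)

theorem image_inc_circleAt (h2 : (2 : K) ≠ 0) (hd : d ≠ 0) :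
    (fun q => q.1) '' Inc (circleAt A d) A d = {A} ∪ circleAt A (2 * d) := by
  refine Subset.antisymm ?_ (union_subset ?_ fun x hx => mem_image_inc_of_mem_circleAt h2 hd hx)
  · rintro _ ⟨q, hq, rfl⟩
    exact eq_or_mem_circleAt_of_mem_inc hd hq
  · exact singleton_subset_iff.mpr (mem_image_inc_self hd)

end Circle

theorem stmt9_general {K : Type*} [Field K] [CharZero K]
    (A : Fin 2 → K) (d : K) (hd : d ≠ 0) :
    conchoid (circleAt A d) A d = {A} ∪ circleAt A (2 * d) := by
  rw [conchoid, image_inc_circleAt two_ne_zero hd, zarClosure_singleton_union_circleAt]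

theorem stmt9 {K : Type*} [Field K] [IsAlgClosed K] [CharZero K]
    (A : Fin 2 → K) (d : K) (hd : d ≠ 0) :
    conchoid (circleAt A d) A d = {A} ∪ circleAt A (2 * d) :=
  stmt9_general A d hd
end

section
/- Let C be an irreducible plane curve with C₀ ≠ ∅, not the circle centered at A of radius d. Then the conchoid C(C,A,d) has at most two irreducible components. -/
open MvPolynomial Set

/-!
Parametrise the conchoid by the pairs `(t, P)` with `P ∈ C` and `t² ‖P - A‖² = d²`, mapped to
`P + t (P - A)`. Pulling a polynomial back along this map and reducing it modulo the quadric
`‖P - A‖² t² - d²` leaves a remainder linear in `t`; since both `t` and `-t` occur over each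
non-isotropic point of `C`, the remainder vanishes on the parameters iff its coefficients vanish
on `C`. Hence, over the function field `F` of `C`, the vanishing ideal of the conchoid is the
preimage of the ideal generated by the quadric in `F[t]`. That quadric is separable, so it is
either irreducible or a product of two coprime linear factors: the vanishing ideal is prime or an
intersection of two primes, and by the Nullstellensatz the zero locus of a prime is irreducible.
-/

open Polynomial in
theorem Polynomial.exists_isPrime_inf_eq_span_of_squarefree {F : Type*} [Field F] {p : F[X]}
    (hsq : Squarefree p) (hpos : 0 < p.natDegree) (hle : p.natDegree ≤ 2) :
    ∃ P Q : Ideal F[X], P.IsPrime ∧ Q.IsPrime ∧ Ideal.span {p} = P ⊓ Q := by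
  have hp0 : p ≠ 0 := hsq.ne_zero
  by_cases hirr : Irreducible p
  · have hP := (Ideal.span_singleton_prime hp0).mpr hirr.prime
    exact ⟨_, _, hP, hP, (inf_idem _).symm⟩
  have hunit : ¬IsUnit p := fun hu => hpos.ne' (natDegree_eq_zero_of_isUnit hu)
  obtain ⟨a, b, rfl, ha, hb⟩ : ∃ a b, p = a * b ∧ ¬IsUnit a ∧ ¬IsUnit b := by
    simpa [irreducible_iff, hunit] using hirr
  have pos_of_not_isUnit {q : F[X]} (hq0 : q ≠ 0) (hq : ¬IsUnit q) : 0 < q.natDegree :=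
    Nat.pos_of_ne_zero fun h =>
      hq (isUnit_iff_degree_eq_zero.mpr (by rw [degree_eq_natDegree hq0, h]; rfl))
  have ha0 := left_ne_zero_of_mul hp0
  have hb0 := right_ne_zero_of_mul hp0
  rw [natDegree_mul ha0 hb0] at hle
  have := pos_of_not_isUnit ha0 ha
  have := pos_of_not_isUnit hb0 hb
  have ha1 : a.degree = 1 := (degree_eq_iff_natDegree_eq ha0).mpr (by omega : a.natDegree = 1)
  have hb1 : b.degree = 1 := (degree_eq_iff_natDegree_eq hb0).mpr (by omega : b.natDegree = 1)
  have hairr := irreducible_of_degree_eq_one ha1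
  have hcop : IsCoprime a b := by
    refine hairr.coprime_iff_not_dvd.mpr fun hab => ha ?_
    exact hsq a (mul_dvd_mul_left a hab)
  refine ⟨_, _, (Ideal.span_singleton_prime ha0).mpr hairr.prime,
    (Ideal.span_singleton_prime hb0).mpr (irreducible_of_degree_eq_one hb1).prime, ?_⟩
  ext x
  simp only [Ideal.mem_inf, Ideal.mem_span_singleton]
  exact ⟨fun h => ⟨dvd_of_mul_right_dvd h, dvd_of_mul_left_dvd h⟩,
    fun h => hcop.mul_dvd h.1 h.2⟩

open Polynomial in
theorem Polynomial.exists_C_pow_mul_sub_linear_dvd {R : Type*} [CommRing R] (u v : R) (h : R[X]) :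
    ∃ (N : ℕ) (a b : R), C u * X ^ 2 - C v ∣ C u ^ N * h - (C a * X + C b) := by
  induction h using Polynomial.induction_on' with
  | add p q hp hq =>
    obtain ⟨M, a, b, hM⟩ := hp
    obtain ⟨N, c, e, hN⟩ := hq
    refine ⟨M + N, u ^ N * a + u ^ M * c, u ^ N * b + u ^ M * e, ?_⟩
    have : C u ^ (M + N) * (p + q) - (C (u ^ N * a + u ^ M * c) * X + C (u ^ N * b + u ^ M * e))
        = C u ^ N * (C u ^ M * p - (C a * X + C b)) +
          C u ^ M * (C u ^ N * q - (C c * X + C e)) := by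
      simp only [map_add, map_mul, map_pow]; ring
    rw [this]
    exact dvd_add (dvd_mul_of_dvd_right hM _) (dvd_mul_of_dvd_right hN _)
  | monomial j c =>
    have hk (k : ℕ) : C u * X ^ 2 - C v ∣ (C u * X ^ 2) ^ k - C v ^ k :=
      sub_dvd_pow_sub_pow _ _ _
    obtain ⟨k, rfl | rfl⟩ := Nat.even_or_odd' j
    · refine ⟨k, 0, c * v ^ k, ?_⟩
      have : C u ^ k * monomial (2 * k) c - (C 0 * X + C (c * v ^ k)) =
          C c * ((C u * X ^ 2) ^ k - C v ^ k) := by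
        simp only [← C_mul_X_pow_eq_monomial, map_mul, map_pow, map_zero]; ring
      rw [this]
      exact dvd_mul_of_dvd_right (hk k) _
    · refine ⟨k, c * v ^ k, 0, ?_⟩
      have : C u ^ k * monomial (2 * k + 1) c - (C (c * v ^ k) * X + C 0) =
          C c * X * ((C u * X ^ 2) ^ k - C v ^ k) := by
        simp only [← C_mul_X_pow_eq_monomial, map_mul, map_pow, map_zero]; ring
      rw [this]
      exact dvd_mul_of_dvd_right (hk k) _

open Polynomial in
theorem Polynomial.dvd_C_add_C_mul_X_iff {R : Type*} [CommRing R] [IsDomain R] {p : R[X]}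
    (hp : 1 < p.natDegree) {a b : R} : p ∣ C a * X + C b ↔ a = 0 ∧ b = 0 := by
  refine ⟨fun h => ?_, fun ⟨ha, hb⟩ => by simp [ha, hb]⟩
  have h0 := eq_zero_of_dvd_of_natDegree_lt h (natDegree_linear_le.trans_lt hp)
  exact ⟨by simpa using congrArg (coeff · 1) h0, by simpa using congrArg (coeff · 0) h0⟩

open Polynomial in
theorem Polynomial.squarefree_C_mul_X_sq_sub_C {F : Type*} [Field F] [NeZero (2 : F)] {u v : F}
    (hu : u ≠ 0) (hv : v ≠ 0) : Squarefree (C u * X ^ 2 - C v) := by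
  have : C u * X ^ 2 - C v = C u * (X ^ 2 - C (v / u)) := by
    rw [mul_sub, ← C_mul, mul_div_cancel₀ v hu]
  rw [this, (associated_unit_mul_left _ _ (isUnit_C.mpr hu.isUnit)).squarefree_iff]
  exact (separable_X_pow_sub_C _ (by exact_mod_cast two_ne_zero) (div_ne_zero hv hu)).squarefree

universe u in
theorem Prime.exists_ringHom_ker_eq {R : Type u} [CommRing R] {f : R} (hf : Prime f) :
    ∃ (F : Type u) (_ : Field F) (ρ : R →+* F), ∀ p, ρ p = 0 ↔ f ∣ p := by
  have := (Ideal.span_singleton_prime hf.ne_zero).mpr hf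
  refine ⟨FractionRing (R ⧸ Ideal.span {f}), inferInstance,
    (algebraMap (R ⧸ Ideal.span {f}) _).comp (Ideal.Quotient.mk _), fun p => ?_⟩
  rw [RingHom.comp_apply, IsFractionRing.to_map_eq_zero_iff, Ideal.Quotient.eq_zero_iff_mem,
    Ideal.mem_span_singleton]

section Zariski

variable {K : Type*} [Field K] {n : ℕ}

theorem zariskiTop_isTopologicalBasis :
    TopologicalSpace.IsTopologicalBasis
      {U : Set (Fin n → K) | ∃ p : MvPolynomial (Fin n) K, U = {x | eval x p ≠ 0}} where
  exists_subset_inter := by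
    rintro _ ⟨p, rfl⟩ _ ⟨q, rfl⟩ x hx
    refine ⟨_, ⟨p * q, rfl⟩, by simpa using hx, fun y hy => ?_⟩
    simpa using hy
  sUnion_eq := Set.eq_univ_of_forall fun x => ⟨_, ⟨1, rfl⟩, by simp⟩
  eq_generateFrom := rfl

theorem isClosed_zeroLocus (I : Ideal (MvPolynomial (Fin n) K)) :
    IsClosed (zeroLocus K I) := by
  have : (zeroLocus K I)ᶜ = ⋃ p ∈ I, {x : Fin n → K | eval x p ≠ 0} := by
    ext x
    simp [mem_zeroLocus_iff]
  rw [← isOpen_compl_iff, this]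
  exact isOpen_biUnion fun p _ => TopologicalSpace.GenerateOpen.basic _ ⟨p, rfl⟩

theorem isIrreducible_zeroLocus [IsAlgClosed K] (P : Ideal (MvPolynomial (Fin n) K))
    [hP : P.IsPrime] : IsIrreducible (zeroLocus K P) := by
  have hvan : vanishingIdeal K (zeroLocus K P) = P := IsPrime.vanishingIdeal_zeroLocus P
  refine ⟨?_, ?_⟩
  · by_contra hne
    rw [Set.not_nonempty_iff_eq_empty.mp hne, vanishingIdeal_empty] at hvan
    exact hP.ne_top hvan.symm
  · rintro u v hu hv ⟨x, hxZ, hxu⟩ ⟨y, hyZ, hyv⟩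
    obtain ⟨_, ⟨p, rfl⟩, hxp, hpu⟩ :=
      zariskiTop_isTopologicalBasis.exists_subset_of_mem_open hxu hu
    obtain ⟨_, ⟨q, rfl⟩, hyq, hqv⟩ :=
      zariskiTop_isTopologicalBasis.exists_subset_of_mem_open hyv hv
    have hpq : p * q ∉ vanishingIdeal K (zeroLocus K P) := by
      rw [hvan]
      exact hP.mul_notMem (fun h => hxp (hxZ p h)) (fun h => hyq (hyZ q h))
    obtain ⟨z, hzZ, hz⟩ : ∃ z ∈ zeroLocus K P, aeval z p * aeval z q ≠ 0 := by
      simpa only [mem_vanishingIdeal_iff, map_mul, not_forall, exists_prop] using hpq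
    exact ⟨z, hzZ, hpu (left_ne_zero_of_mul hz), hqv (right_ne_zero_of_mul hz)⟩

theorem zeroLocus_inf (I J : Ideal (MvPolynomial (Fin n) K)) :
    zeroLocus K (I ⊓ J) = zeroLocus K I ∪ zeroLocus K J := by
  refine subset_antisymm (fun x hx => ?_) (Set.union_subset
    (zeroLocus_anti_mono inf_le_left) (zeroLocus_anti_mono inf_le_right))
  by_contra hx'
  simp only [Set.mem_union, mem_zeroLocus_iff, not_or, not_forall] at hx'
  obtain ⟨⟨p, hpI, hpx⟩, ⟨q, hqJ, hqx⟩⟩ := hx'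
  have := hx (p * q) ⟨I.mul_mem_right q hpI, J.mul_mem_left p hqJ⟩
  rw [map_mul] at this
  exact mul_ne_zero hpx hqx this

theorem zarClosure_eq_union_of_vanishingIdeal_eq_inf [IsAlgClosed K] {S : Set (Fin n → K)}
    {P Q : Ideal (MvPolynomial (Fin n) K)} [P.IsPrime] [Q.IsPrime]
    (hS : vanishingIdeal K S = P ⊓ Q) :
    ∃ T₁ T₂ : Set (Fin n → K),
      IsIrreducible T₁ ∧ IsClosed T₁ ∧ IsIrreducible T₂ ∧ IsClosed T₂ ∧
      zarClosure K n S = T₁ ∪ T₂ := by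
  refine ⟨zeroLocus K P, zeroLocus K Q, isIrreducible_zeroLocus P, isClosed_zeroLocus P,
    isIrreducible_zeroLocus Q, isClosed_zeroLocus Q, ?_⟩
  rw [← zeroLocus_inf, ← hS]
  rfl

theorem dvd_of_forall_eval_eq_zero [IsAlgClosed K]
    {f a : MvPolynomial (Fin n) K} (hf : Prime f) (ha : ∀ x, eval x f = 0 → eval x a = 0) :
    f ∣ a := by
  have := (Ideal.span_singleton_prime hf.ne_zero).mpr hf
  rw [← Ideal.mem_span_singleton, ← IsPrime.vanishingIdeal_zeroLocus (K := K) (Ideal.span {f})]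
  exact fun x hx => ha x (hx f (Ideal.subset_span rfl))

end Zariski

section Conchoid

variable {K : Type*} [Field K]

noncomputable def sqDistPoly (A : Fin 2 → K) : MvPolynomial (Fin 2) K :=
  (X 0 - C (A 0)) ^ 2 + (X 1 - C (A 1)) ^ 2

@[simp] theorem eval_sqDistPoly (A P : Fin 2 → K) : eval P (sqDistPoly A) = nSq A P := by
  simp [sqDistPoly, nSq]

def conchoidParams (f : MvPolynomial (Fin 2) K) (A : Fin 2 → K) (d : K) :
    Set (K × (Fin 2 → K)) :=
  {z | eval z.2 f = 0 ∧ nSq A z.2 * z.1 ^ 2 = d ^ 2}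

def conchoidPoint (A : Fin 2 → K) (z : K × (Fin 2 → K)) : Fin 2 → K :=
  fun i => z.2 i + z.1 * (z.2 i - A i)

theorem nSq_ne_zero_of_mem_conchoidParams {f : MvPolynomial (Fin 2) K} {A : Fin 2 → K}
    {d : K} (hd : d ≠ 0) {z : K × (Fin 2 → K)} (hz : z ∈ conchoidParams f A d) :
    nSq A z.2 ≠ 0 := by
  intro h
  exact pow_ne_zero 2 hd (by rw [← hz.2, h, zero_mul])

theorem image_fst_inc_eq_image_conchoidPoint {f : MvPolynomial (Fin 2) K} {A : Fin 2 → K}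
    {d : K} (hd : d ≠ 0) :
    (fun q => q.1) '' Inc (curveOf f) A d = conchoidPoint A '' conchoidParams f A d := by
  ext Q
  constructor
  · rintro ⟨⟨Q, P, s⟩, ⟨hP, hdist, hcol, hs⟩, rfl⟩
    have hn : nSq A P ≠ 0 := right_ne_zero_of_mul_eq_one hs
    -- `Q - P` is parallel to `P - A`, so `Q - P = t • (P - A)` with `t` a ratio of dot products
    set t := ((Q 0 - P 0) * (P 0 - A 0) + (Q 1 - P 1) * (P 1 - A 1)) / nSq A P
    have ht : t * nSq A P = (Q 0 - P 0) * (P 0 - A 0) + (Q 1 - P 1) * (P 1 - A 1) :=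
      div_mul_cancel₀ _ hn
    have hQ0 : Q 0 - P 0 = t * (P 0 - A 0) := by
      refine mul_right_cancel₀ hn ?_
      simp only [nSq] at ht ⊢
      linear_combination (P 1 - A 1) * hcol - (P 0 - A 0) * ht
    have hQ1 : Q 1 - P 1 = t * (P 1 - A 1) := by
      refine mul_right_cancel₀ hn ?_
      simp only [nSq] at ht ⊢
      linear_combination -(P 0 - A 0) * hcol - (P 1 - A 1) * ht
    refine ⟨(t, P), ⟨hP, ?_⟩, ?_⟩
    · simp only [nSq]
      linear_combination hdist - (Q 0 - P 0 + t * (P 0 - A 0)) * hQ0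
        - (Q 1 - P 1 + t * (P 1 - A 1)) * hQ1
    · funext i
      fin_cases i
      · show P 0 + t * (P 0 - A 0) = Q 0
        linear_combination -hQ0
      · show P 1 + t * (P 1 - A 1) = Q 1
        linear_combination -hQ1
  · rintro ⟨⟨t, P⟩, hz, rfl⟩
    have hn := nSq_ne_zero_of_mem_conchoidParams hd hz
    refine ⟨(conchoidPoint A (t, P), P, (nSq A P)⁻¹), ⟨hz.1, ?_, ?_, inv_mul_cancel₀ hn⟩, rfl⟩
    · simp only [conchoidPoint]
      linear_combination (norm := (simp only [nSq]; ring)) hz.2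
    · simp only [conchoidPoint]
      ring

theorem dvd_and_dvd_of_forall_mem_conchoidParams [IsAlgClosed K] [NeZero (2 : K)]
    {f : MvPolynomial (Fin 2) K} (hf : Prime f) {A : Fin 2 → K} {d : K} (hd : d ≠ 0)
    (hfA : ¬f ∣ sqDistPoly A) {a b : MvPolynomial (Fin 2) K}
    (hab : ∀ z ∈ conchoidParams f A d, eval z.2 a * z.1 + eval z.2 b = 0) :
    f ∣ a ∧ f ∣ b := by
  -- over each non-isotropic point `P` of the curve lie the two parameters `±t`
  have hpt : ∀ P, eval P f = 0 → nSq A P ≠ 0 → eval P a = 0 ∧ eval P b = 0 := by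
    intro P hP hn
    obtain ⟨t, ht⟩ := IsAlgClosed.exists_pow_nat_eq (d ^ 2 / nSq A P) two_pos
    have htP : nSq A P * t ^ 2 = d ^ 2 := by rw [ht]; field_simp
    have ht0 : t ≠ 0 := by rintro rfl; exact pow_ne_zero 2 hd (by simpa using htP.symm)
    have e₁ := hab (t, P) ⟨hP, htP⟩
    have e₂ := hab (-t, P) ⟨hP, by rwa [neg_sq]⟩
    have ha : eval P a = 0 := by
      have : eval P a * (2 * t) = 0 := by linear_combination e₁ - e₂
      simpa [ht0, two_ne_zero] using this
    refine ⟨ha, by simpa [ha] using e₁⟩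
  have hdvd : ∀ c : MvPolynomial (Fin 2) K,
      (∀ P, eval P f = 0 → nSq A P ≠ 0 → eval P c = 0) → f ∣ c := by
    intro c hc
    refine (hf.dvd_or_dvd (dvd_of_forall_eval_eq_zero hf fun P hP => ?_)).resolve_left hfA
    by_cases hn : nSq A P = 0
    · simp [hn]
    · simp [hc P hP hn]
  exact ⟨hdvd a fun P hP hn => (hpt P hP hn).1, hdvd b fun P hP hn => (hpt P hP hn).2⟩

end Conchoid

section ConchoidIdeal

variable {K : Type*} [Field K]

noncomputable def conchoidSubst (A : Fin 2 → K) :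
    MvPolynomial (Fin 2) K →+* Polynomial (MvPolynomial (Fin 2) K) :=
  eval₂Hom (Polynomial.C.comp C)
    (fun i => Polynomial.C (X i) + Polynomial.X * Polynomial.C (X i - C (A i)))

noncomputable def evalParam (z : K × (Fin 2 → K)) :
    Polynomial (MvPolynomial (Fin 2) K) →+* K :=
  Polynomial.eval₂RingHom (eval z.2) z.1

noncomputable def conchoidQuadric (A : Fin 2 → K) (d : K) :
    Polynomial (MvPolynomial (Fin 2) K) :=
  Polynomial.C (sqDistPoly A) * Polynomial.X ^ 2 - Polynomial.C (C (d ^ 2))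

@[simp] theorem evalParam_C (z : K × (Fin 2 → K)) (p : MvPolynomial (Fin 2) K) :
    evalParam z (Polynomial.C p) = eval z.2 p :=
  Polynomial.eval₂_C _ _

@[simp] theorem evalParam_X (z : K × (Fin 2 → K)) : evalParam z Polynomial.X = z.1 :=
  Polynomial.eval₂_X _ _

theorem evalParam_conchoidSubst (A : Fin 2 → K) (z : K × (Fin 2 → K))
    (p : MvPolynomial (Fin 2) K) :
    evalParam z (conchoidSubst A p) = eval (conchoidPoint A z) p := by
  suffices (evalParam z).comp (conchoidSubst A) = eval (conchoidPoint A z) from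
    DFunLike.congr_fun this p
  apply MvPolynomial.ringHom_ext
  · intro r
    simp [conchoidSubst, evalParam]
  · intro i
    simp [conchoidSubst, evalParam, conchoidPoint]

theorem evalParam_conchoidQuadric {A : Fin 2 → K} {d : K} (f : MvPolynomial (Fin 2) K)
    {z : K × (Fin 2 → K)} (hz : z ∈ conchoidParams f A d) :
    evalParam z (conchoidQuadric A d) = 0 := by
  simp only [conchoidQuadric, map_sub, map_mul, map_pow, evalParam_C, evalParam_X,
    eval_sqDistPoly, eval_C, hz.2, sub_self]

theorem conchoidQuadric_map {F : Type*} [CommRing F] (ρ : MvPolynomial (Fin 2) K →+* F)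
    (A : Fin 2 → K) (d : K) :
    (conchoidQuadric A d).map ρ =
      Polynomial.C (ρ (sqDistPoly A)) * Polynomial.X ^ 2 - Polynomial.C (ρ (C (d ^ 2))) := by
  simp only [conchoidQuadric, Polynomial.map_sub, Polynomial.map_mul, Polynomial.map_pow,
    Polynomial.map_C, Polynomial.map_X]

theorem conchoidQuadric_map_natDegree {F : Type*} [Field F] (ρ : MvPolynomial (Fin 2) K →+* F)
    {A : Fin 2 → K} (hA : ρ (sqDistPoly A) ≠ 0) (d : K) :
    ((conchoidQuadric A d).map ρ).natDegree = 2 := by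
  rw [conchoidQuadric_map, Polynomial.natDegree_sub_C, Polynomial.natDegree_C_mul_X_pow 2 _ hA]

theorem forall_evalParam_eq_zero_iff [IsAlgClosed K] [NeZero (2 : K)] {F : Type*} [Field F]
    (ρ : MvPolynomial (Fin 2) K →+* F) {f : MvPolynomial (Fin 2) K} (hf : Prime f)
    (hker : ∀ p, ρ p = 0 ↔ f ∣ p) {A : Fin 2 → K} {d : K} (hd : d ≠ 0)
    (hfA : ¬f ∣ sqDistPoly A) (h : Polynomial (MvPolynomial (Fin 2) K)) :
    (∀ z ∈ conchoidParams f A d, evalParam z h = 0) ↔ (conchoidQuadric A d).map ρ ∣ h.map ρ := by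
  have hA : ρ (sqDistPoly A) ≠ 0 := fun h => hfA ((hker _).mp h)
  obtain ⟨N, a, b, hG⟩ :=
    Polynomial.exists_C_pow_mul_sub_linear_dvd (sqDistPoly A) (C (d ^ 2)) h
  rw [← conchoidQuadric] at hG
  have hGz : ∀ z ∈ conchoidParams f A d,
      nSq A z.2 ^ N * evalParam z h = eval z.2 a * z.1 + eval z.2 b := by
    intro z hz
    obtain ⟨q, hq⟩ := hG
    have := congrArg (evalParam z) hq
    rw [map_mul, evalParam_conchoidQuadric f hz, zero_mul, map_sub, sub_eq_zero] at this
    simpa only [map_mul, map_pow, map_add, evalParam_C, evalParam_X, eval_sqDistPoly] using this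
  have hGF : (conchoidQuadric A d).map ρ ∣ Polynomial.C (ρ (sqDistPoly A)) ^ N * h.map ρ -
      (Polynomial.C (ρ a) * Polynomial.X + Polynomial.C (ρ b)) := by
    simpa only [Polynomial.map_sub, Polynomial.map_mul, Polynomial.map_pow, Polynomial.map_add,
      Polynomial.map_C, Polynomial.map_X] using Polynomial.map_dvd ρ hG
  calc (∀ z ∈ conchoidParams f A d, evalParam z h = 0)
      ↔ ∀ z ∈ conchoidParams f A d, eval z.2 a * z.1 + eval z.2 b = 0 := by
        refine forall₂_congr fun z hz => ?_
        rw [← hGz z hz, mul_eq_zero_iff_left (pow_ne_zero N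
          (nSq_ne_zero_of_mem_conchoidParams hd hz))]
    _ ↔ f ∣ a ∧ f ∣ b := by
        refine ⟨dvd_and_dvd_of_forall_mem_conchoidParams hf hd hfA, ?_⟩
        rintro ⟨⟨a, rfl⟩, ⟨b, rfl⟩⟩ z hz
        simp [hz.1]
    _ ↔ (conchoidQuadric A d).map ρ ∣
          Polynomial.C (ρ a) * Polynomial.X + Polynomial.C (ρ b) := by
        rw [Polynomial.dvd_C_add_C_mul_X_iff
          (by rw [conchoidQuadric_map_natDegree ρ hA]; norm_num), hker, hker]
    _ ↔ (conchoidQuadric A d).map ρ ∣ h.map ρ := by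
        rw [← dvd_iff_dvd_of_dvd_sub hGF, IsUnit.dvd_mul_left]
        exact (Polynomial.isUnit_C.mpr hA.isUnit).pow N

theorem vanishingIdeal_image_fst_inc [IsAlgClosed K] [NeZero (2 : K)] {F : Type*} [Field F]
    (ρ : MvPolynomial (Fin 2) K →+* F) {f : MvPolynomial (Fin 2) K} (hf : Prime f)
    (hker : ∀ p, ρ p = 0 ↔ f ∣ p) {A : Fin 2 → K} {d : K} (hd : d ≠ 0)
    (hfA : ¬f ∣ sqDistPoly A) :
    vanishingIdeal K ((fun q => q.1) '' Inc (curveOf f) A d) =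
      Ideal.comap ((Polynomial.mapRingHom ρ).comp (conchoidSubst A))
        (Ideal.span {(conchoidQuadric A d).map ρ}) := by
  ext p
  rw [image_fst_inc_eq_image_conchoidPoint hd, mem_vanishingIdeal_iff, Set.forall_mem_image,
    Ideal.mem_comap, Ideal.mem_span_singleton, RingHom.comp_apply, Polynomial.coe_mapRingHom,
    ← forall_evalParam_eq_zero_iff ρ hf hker hd hfA]
  simp only [evalParam_conchoidSubst]
  rfl

end ConchoidIdeal

theorem stmt10_general {K : Type*} [Field K] [IsAlgClosed K] [CharZero K]
    (f : MvPolynomial (Fin 2) K) (hf : Irreducible f)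
    (A : Fin 2 → K) (d : K) (hd : d ≠ 0)
    (h0 : (nonIso (curveOf f) A).Nonempty) :
    ∃ T₁ T₂ : Set (Fin 2 → K),
      IsIrreducible T₁ ∧ IsClosed T₁ ∧ IsIrreducible T₂ ∧ IsClosed T₂ ∧
      conchoid (curveOf f) A d = T₁ ∪ T₂ := by
  obtain ⟨P₀, hP₀, hP₀A⟩ := h0
  have hfp : Prime f := hf.prime
  have hfA : ¬f ∣ sqDistPoly A := by
    rintro ⟨c, hc⟩
    apply hP₀A
    rw [← eval_sqDistPoly, hc, map_mul, hP₀, zero_mul]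
  obtain ⟨F, _, ρ, hker⟩ := hfp.exists_ringHom_ker_eq
  have hρC : ∀ c : K, c ≠ 0 → ρ (C c) ≠ 0 := fun c hc h =>
    hfp.not_isUnit (isUnit_of_dvd_unit ((hker _).mp h) (hc.isUnit.map C))
  have hA : ρ (sqDistPoly A) ≠ 0 := fun h => hfA ((hker _).mp h)
  have : NeZero (2 : F) := ⟨by
    have h2 := hρC 2 two_ne_zero
    rwa [map_ofNat C 2, map_ofNat] at h2⟩
  have hdeg := conchoidQuadric_map_natDegree ρ hA d
  obtain ⟨P, Q, _, _, hPQ⟩ := Polynomial.exists_isPrime_inf_eq_span_of_squarefree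
    (by rw [conchoidQuadric_map]
        exact Polynomial.squarefree_C_mul_X_sq_sub_C hA (hρC _ (pow_ne_zero 2 hd)))
    (by rw [hdeg]; norm_num) hdeg.le
  have hvan := vanishingIdeal_image_fst_inc ρ hfp hker hd hfA
  rw [hPQ, Ideal.comap_inf] at hvan
  exact zarClosure_eq_union_of_vanishingIdeal_eq_inf hvan

theorem stmt10 {K : Type*} [Field K] [IsAlgClosed K] [CharZero K]
    (f : MvPolynomial (Fin 2) K) (hf : Irreducible f)
    (A : Fin 2 → K) (d : K) (hd : d ≠ 0)
    (h0 : (nonIso (curveOf f) A).Nonempty)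
    (hC : curveOf f ≠ circleAt A d) :
    ∃ T₁ T₂ : Set (Fin 2 → K),
      IsIrreducible T₁ ∧ IsClosed T₁ ∧ IsIrreducible T₂ ∧ IsClosed T₂ ∧
      conchoid (curveOf f) A d = T₁ ∪ T₂ :=
  stmt10_general f hf A d hd h0
end

section
/- Let M be an irreducible component of the conchoid C(C,A,d) of an irreducible curve C (not a circle centered at A) with C₀ ≠ ∅. Then the open subset M₀ = {P ∈ M : ‖P-A‖² ≠ 0} is nonempty; in particular no component of a conchoid is an isotropic line through the focus. -/
open MvPolynomial Set

/-!
If no point of `M` were non-isotropic, irreducibility would put `M` inside one isotropic line `L`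
through `A`. A point of `π₁(B)` has the form `P + τ (P - A)` with `‖P - A‖² ≠ 0`, so `P ∉ L` and it
can lie on `L` only when it is `A` itself. Being a component of the closure of `π₁(B)`, `M` is the
closure of its trace on `π₁(B)`, hence `M = {A}`, and `A` is generated by some `P₀ ∈ C` with
`‖P₀ - A‖² = d²`.

This is impossible because `A` is not isolated in the conchoid. If `h` vanishes on `π₁(B) \ {A}`,
the even part in `τ` of `h (P + τ (P - A))`, made polynomial in `P` through `τ² ‖P - A‖² = d²`,
vanishes on `C` off the isotropic cone and off the circle of radius `d` about `A`. As `C` is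
irreducible and contained in neither, it vanishes on all of `C`; at `P₀` it is a nonzero multiple
of `h (2 P₀ - A) + h A = h A`.
-/

open TopologicalSpace

section Zariski

variable {K : Type*} [Field K] {n : ℕ}

lemma isClosed_setOf_eval_eq_zero (p : MvPolynomial (Fin n) K) :
    IsClosed {x : Fin n → K | eval x p = 0} :=
  isOpen_compl_iff.mp (GenerateOpen.basic _ ⟨p, rfl⟩)

lemma isClosed_zarClosure (S : Set (Fin n → K)) : IsClosed (zarClosure K n S) := by
  simp only [zarClosure, ofPred_forall]
  exact isClosed_iInter fun p => isClosed_iInter fun _ => isClosed_setOf_eval_eq_zero p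

lemma IsOpen.exists_eval_ne_zero_subset {U : Set (Fin n → K)} (hU : IsOpen U) {x : Fin n → K}
    (hx : x ∈ U) : ∃ p : MvPolynomial (Fin n) K, eval x p ≠ 0 ∧ {y | eval y p ≠ 0} ⊆ U := by
  induction hU generalizing x with
  | basic V hV =>
    obtain ⟨p, rfl⟩ := hV
    exact ⟨p, hx, subset_rfl⟩
  | univ => exact ⟨1, by simp, subset_univ _⟩
  | inter U V _ _ ihU ihV =>
    obtain ⟨p, hp, hpU⟩ := ihU hx.1
    obtain ⟨q, hq, hqV⟩ := ihV hx.2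
    refine ⟨p * q, by simp [hp, hq], fun y hy => ?_⟩
    rw [mem_ofPred_eq, map_mul] at hy
    exact ⟨hpU (left_ne_zero_of_mul hy), hqV (right_ne_zero_of_mul hy)⟩
  | sUnion S _ ih =>
    obtain ⟨V, hV, hxV⟩ := hx
    obtain ⟨p, hp, hpV⟩ := ih V hV hxV
    exact ⟨p, hp, hpV.trans (subset_sUnion_of_mem hV)⟩

lemma zarClosure_eq_closure (S : Set (Fin n → K)) : zarClosure K n S = closure S := by
  refine subset_antisymm (fun x hx => ?_)
    (closure_minimal (fun s hs p hp => hp s hs) (isClosed_zarClosure S))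
  by_contra hxS
  obtain ⟨p, hpx, hp⟩ := isClosed_closure.isOpen_compl.exists_eval_ne_zero_subset hxS
  refine hpx (hx p fun s hs => ?_)
  by_contra hps
  exact hp hps (subset_closure hs)

lemma IsClosed.zeroLocus_vanishingIdeal_eq {F : Set (Fin n → K)} (hF : IsClosed F) :
    zeroLocus K (vanishingIdeal K F) = F :=
  (zarClosure_eq_closure F).trans hF.closure_eq

instance : NoetherianSpace (Fin n → K) := by
  let I : Opens (Fin n → K) → Ideal (MvPolynomial (Fin n) K) :=
    fun U => vanishingIdeal K (U : Set (Fin n → K))ᶜ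
  have hI : StrictMono I := Monotone.strictMono_of_injective
    (fun U V hUV => vanishingIdeal_anti_mono (compl_subset_compl.mpr hUV)) fun U V hUV => by
      have h := congrArg (zeroLocus K) hUV
      rw [U.isOpen.isClosed_compl.zeroLocus_vanishingIdeal_eq,
        V.isOpen.isClosed_compl.zeroLocus_vanishingIdeal_eq] at h
      exact Opens.ext (compl_injective h)
  exact hI.wellFoundedGT

instance : T1Space (Fin n → K) := by
  refine ⟨fun a => ?_⟩
  have h : {a} = ⋂ j, {x : Fin n → K | eval x (X j - C (a j)) = 0} := by
    ext x
    simp [funext_iff, sub_eq_zero]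
  rw [h]
  exact isClosed_iInter fun j => isClosed_setOf_eval_eq_zero _

end Zariski

section MaximalIrreducible

variable {X : Type*} [TopologicalSpace X] [NoetherianSpace X] {S M : Set X}

lemma not_subset_closure_diff_of_maximal (hM : IsIrreducible M)
    (hmax : ∀ M', IsIrreducible M' → M' ⊆ closure S → M ⊆ M' → M' = M) :
    ¬ M ⊆ closure (S \ M) := by
  classical
  obtain ⟨F, hFfin, hFcl, hFirr, hSF⟩ :=
    NoetherianSpace.exists_finite_set_isClosed_irreducible (isClosed_closure (s := S))
  lift F to Finset (Set X) using hFfin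
  set F' := F.filter fun t => ¬ M ⊆ t
  have hF'cl : ∀ t ∈ F', IsClosed t := fun t ht => hFcl t (Finset.mem_filter.mp ht).1
  have hdiff : S \ M ⊆ ⋃₀ ↑F' := by
    rintro s ⟨hsS, hsM⟩
    obtain ⟨t, htF, hst⟩ : s ∈ ⋃₀ ↑F := hSF ▸ subset_closure hsS
    refine ⟨t, Finset.mem_filter.mpr ⟨htF, fun hMt => hsM ?_⟩, hst⟩
    rwa [← hmax t (hFirr t htF) (hSF ▸ subset_sUnion_of_mem htF) hMt]
  intro hMS
  have hMF' : M ⊆ ⋃₀ ↑F' := hMS.trans <| closure_minimal hdiff <| by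
    rw [sUnion_eq_biUnion]
    exact isClosed_biUnion_finset hF'cl
  obtain ⟨t, ht, hMt⟩ := isIrreducible_iff_sUnion_isClosed.mp hM F' hF'cl hMF'
  exact (Finset.mem_filter.mp ht).2 hMt

lemma subset_closure_inter_of_maximal (hM : IsIrreducible M) (hMS : M ⊆ closure S)
    (hmax : ∀ M', IsIrreducible M' → M' ⊆ closure S → M ⊆ M' → M' = M) :
    M ⊆ closure (S ∩ M) := by
  have hcover : M ⊆ closure (S ∩ M) ∪ closure (S \ M) := by
    rwa [← closure_union, inter_union_sdiff]
  exact ((isPreirreducible_iff_isClosed_union_isClosed.mp hM.2) _ _ isClosed_closure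
    isClosed_closure hcover).resolve_right (not_subset_closure_diff_of_maximal hM hmax)

lemma eq_singleton_of_maximal_of_inter_subset [T1Space X] {a : X} (hM : IsIrreducible M)
    (hMS : M ⊆ closure S) (hmax : ∀ M', IsIrreducible M' → M' ⊆ closure S → M ⊆ M' → M' = M)
    (hSM : S ∩ M ⊆ {a}) : M = {a} ∧ a ∈ S := by
  have hMcl := subset_closure_inter_of_maximal hM hMS hmax
  have hMa : M = {a} := hM.nonempty.subset_singleton_iff.mp <|
    hMcl.trans <| (closure_mono hSM).trans closure_singleton.subset
  refine ⟨hMa, by_contra fun haS => ?_⟩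
  rw [hMa, singleton_subset_iff, inter_singleton_eq_empty.mpr haS, closure_empty] at hMcl
  exact hMcl

end MaximalIrreducible

lemma Finset.sum_range_two_mul {M : Type*} [AddCommMonoid M] (n : ℕ) (F : ℕ → M) :
    ∑ k ∈ range (2 * n), F k = ∑ j ∈ range n, (F (2 * j) + F (2 * j + 1)) := by
  induction n with
  | zero => simp
  | succ m ih => rw [mul_add_one, sum_range_succ, sum_range_succ, sum_range_succ, ih, add_assoc]

namespace Polynomial

variable {R S : Type*} [CommRing R] [CommRing S]

/-- The even part of `H` at `t² = c / g`, with the denominator `g ^ H.natDegree` cleared. -/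
def evenPartHomog (H : R[X]) (c g : R) : R :=
  ∑ j ∈ Finset.range (H.natDegree + 1), H.coeff (2 * j) * c ^ j * g ^ (H.natDegree - j)

lemma two_mul_map_evenPartHomog (φ : R →+* S) (H : R[X]) (c g : R) {τ : S}
    (hτ : τ ^ 2 * φ g = φ c) :
    2 * φ (evenPartHomog H c g) = φ g ^ H.natDegree * (H.eval₂ φ τ + H.eval₂ φ (-τ)) := by
  set N := H.natDegree
  have hsum : H.eval₂ φ τ + H.eval₂ φ (-τ) =
      2 * ∑ j ∈ Finset.range (N + 1), φ (H.coeff (2 * j)) * τ ^ (2 * j) := by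
    rw [eval₂_eq_sum_range' φ (n := 2 * (N + 1)) (by omega),
      eval₂_eq_sum_range' φ (n := 2 * (N + 1)) (by omega), ← Finset.sum_add_distrib,
      Finset.sum_range_two_mul, Finset.mul_sum]
    refine Finset.sum_congr rfl fun j _ => ?_
    rw [Even.neg_pow (even_two_mul j), Odd.neg_pow (odd_two_mul_add_one j)]
    ring
  have hterm : ∀ j ∈ Finset.range (N + 1),
      φ (H.coeff (2 * j) * c ^ j * g ^ (N - j)) =
        φ g ^ N * (φ (H.coeff (2 * j)) * τ ^ (2 * j)) := by
    intro j hj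
    rw [map_mul, map_mul, map_pow, map_pow, ← hτ, mul_pow, ← pow_mul, mul_assoc, mul_assoc,
      ← pow_add, Nat.add_sub_cancel' (Finset.mem_range_succ_iff.mp hj)]
    ring
  rw [hsum, evenPartHomog, map_sum, Finset.sum_congr rfl hterm, ← Finset.mul_sum]
  ring

end Polynomial

section Polynomials

variable {K : Type*} [Field K]

lemma Irreducible.dvd_of_forall_eval_eq_zero [IsAlgClosed K] {σ : Type*} [Finite σ]
    {f p : MvPolynomial σ K} (hf : Irreducible f) (h : ∀ x, eval x f = 0 → eval x p = 0) :
    f ∣ p := by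
  have hp : p ∈ vanishingIdeal K (zeroLocus K (Ideal.span {f})) :=
    fun x hx => h x (hx f (Ideal.subset_span rfl))
  rwa [vanishingIdeal_zeroLocus_eq_radical, (Ideal.span_singleton_prime hf.ne_zero).mpr
    hf.prime |>.radical, Ideal.mem_span_singleton] at hp

/-- `h (X + t • (X - A))` as a polynomial in `t`. -/
noncomputable def radialPoly {σ : Type*} (A : σ → K) (h : MvPolynomial σ K) :
    Polynomial (MvPolynomial σ K) :=
  aeval (fun j => Polynomial.C (X j) + Polynomial.X * Polynomial.C (X j - C (A j))) h

lemma eval₂_radialPoly {σ : Type*} (A P : σ → K) (h : MvPolynomial σ K) (τ : K) :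
    (radialPoly A h).eval₂ (eval P) τ = eval (P + τ • (P - A)) h := by
  induction h using MvPolynomial.induction_on with
  | C a => simp [radialPoly]
  | add p q hp hq => simp_all [radialPoly]
  | mul_X p j hp => simp_all [radialPoly]

noncomputable def nSqPoly (A : Fin 2 → K) : MvPolynomial (Fin 2) K :=
  (X 0 - C (A 0)) ^ 2 + (X 1 - C (A 1)) ^ 2

@[simp]
lemma eval_nSqPoly (A P : Fin 2 → K) : eval P (nSqPoly A) = nSq A P := by
  simp [nSqPoly, nSq]

lemma irreducible_X_mul_X_sub_C {c : K} (hc : c ≠ 0) :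
    Irreducible (X 0 * X 1 - C c : MvPolynomial (Fin 2) K) := by
  rw [← MulEquiv.irreducible_iff (finSuccEquiv K 1)]
  have himg : finSuccEquiv K 1 (X 0 * X 1 - C c) =
      Polynomial.C (X 0) * Polynomial.X + Polynomial.C (-C c) := by
    have hC : finSuccEquiv K 1 (C c) = Polynomial.C (C c) := (finSuccEquiv K 1).commutes c
    rw [map_sub, map_mul, show (1 : Fin 2) = Fin.succ 0 from rfl, finSuccEquiv_X_zero,
      finSuccEquiv_X_succ, hC, map_neg]
    ring
  rw [himg]
  exact Polynomial.irreducible_C_mul_X_add_C (X_ne_zero 0)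
    ((isUnit_iff_ne_zero.mpr hc).map C).neg.isRelPrime_right

lemma irreducible_nSqPoly_sub_C [NeZero (2 : K)] (A : Fin 2 → K) {i c : K} (hi : i ^ 2 = -1)
    (hc : c ≠ 0) : Irreducible (nSqPoly A - C c) := by
  -- the affine change of coordinates `u = (x - a) + i (y - b)`, `v = (x - a) - i (y - b)`
  -- turns the circle into the hyperbola `u v = c`
  let toCircle : MvPolynomial (Fin 2) K →ₐ[K] MvPolynomial (Fin 2) K :=
    aeval ![C (A 0) + C 2⁻¹ * (X 0 + X 1), C (A 1) + C 2⁻¹ * C i * (X 1 - X 0)]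
  let toHyperbola : MvPolynomial (Fin 2) K →ₐ[K] MvPolynomial (Fin 2) K :=
    aeval ![(X 0 - C (A 0)) + C i * (X 1 - C (A 1)), (X 0 - C (A 0)) - C i * (X 1 - C (A 1))]
  have h2 : (C 2⁻¹ : MvPolynomial (Fin 2) K) * 2 = 1 := by
    rw [← map_ofNat C 2, ← C_mul, inv_mul_cancel₀ two_ne_zero, C_1]
  have hi' : (C i : MvPolynomial (Fin 2) K) ^ 2 = -1 := by rw [← C_pow, hi, C_neg, C_1]
  have hcomp : toHyperbola.comp toCircle = AlgHom.id K _ := by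
    refine MvPolynomial.algHom_ext fun j => ?_
    fin_cases j <;>
      simp only [toCircle, toHyperbola, Fin.zero_eta, Fin.mk_one, AlgHom.comp_apply, aeval_X,
        aeval_C, algebraMap_eq, map_add, map_sub, map_mul, Matrix.cons_val_zero,
        Matrix.cons_val_one, Matrix.cons_val_fin_one, AlgHom.id_apply]
    · linear_combination (X 0 - C (A 0)) * h2
    · linear_combination (X 1 - C (A 1)) * h2 - 2 * C 2⁻¹ * (X 1 - C (A 1)) * hi'
  have himg : toCircle (nSqPoly A - C c) = X 0 * X 1 - C c := by
    simp only [toCircle, nSqPoly, map_sub, map_add, map_pow, aeval_X, aeval_C, algebraMap_eq,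
      Matrix.cons_val_zero, Matrix.cons_val_one, Matrix.cons_val_fin_one]
    linear_combination (2 * C 2⁻¹ + 1) * X 0 * X 1 * h2 + (C 2⁻¹) ^ 2 * (X 1 - X 0) ^ 2 * hi'
  have : IsLocalHom toCircle :=
    isLocalHom_of_leftInverse toHyperbola fun p => AlgHom.congr_fun hcomp p
  exact Irreducible.of_map (f := toCircle) (himg ▸ irreducible_X_mul_X_sub_C hc)

end Polynomials

section Conchoid

variable {K : Type*} [Field K]

lemma add_smul_sub_eq_iff {V : Type*} [AddCommGroup V] [Module K V] {P A : V} {τ : K} :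
    P + τ • (P - A) = A ↔ τ = -1 ∨ P = A := by
  rw [← sub_eq_zero, show P + τ • (P - A) - A = (1 + τ) • (P - A) by module, smul_eq_zero,
    sub_eq_zero, add_eq_zero_iff_eq_neg']

lemma ne_of_nSq_ne_zero {A P : Fin 2 → K} (h : nSq A P ≠ 0) : P ≠ A := by
  rintro rfl
  simp [nSq] at h

def conchoidPoints (C : Set (Fin 2 → K)) (A : Fin 2 → K) (d : K) : Set (Fin 2 → K) :=
  (fun q => q.1) '' Inc C A d

lemma conchoid_eq_closure (C : Set (Fin 2 → K)) (A : Fin 2 → K) (d : K) :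
    conchoid C A d = closure (conchoidPoints C A d) :=
  zarClosure_eq_closure _

lemma mem_conchoidPoints_iff {C : Set (Fin 2 → K)} {A : Fin 2 → K} {d : K} {Q : Fin 2 → K} :
    Q ∈ conchoidPoints C A d ↔
      ∃ P ∈ nonIso C A, ∃ τ : K, τ ^ 2 * nSq A P = d ^ 2 ∧ Q = P + τ • (P - A) := by
  constructor
  · rintro ⟨⟨Q, P, w⟩, ⟨hPC, hdist, hcol, hw⟩, rfl⟩
    dsimp only at hdist hcol hw ⊢
    have hP : (P 0 - A 0) ^ 2 + (P 1 - A 1) ^ 2 ≠ 0 := right_ne_zero_of_mul_eq_one hw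
    -- the coefficient of `Q - P` along `P - A`, by Lagrange's identity its square is `d² / nSq A P`
    refine ⟨P, ⟨hPC, hP⟩,
      ((P 0 - A 0) * (Q 0 - P 0) + (P 1 - A 1) * (Q 1 - P 1)) / nSq A P, ?_, ?_⟩
    · simp only [nSq]
      field_simp
      linear_combination ((P 0 - A 0) ^ 2 + (P 1 - A 1) ^ 2) * hdist
        - ((P 1 - A 1) * (Q 0 - P 0) - (P 0 - A 0) * (Q 1 - P 1)) * hcol
    · funext j
      fin_cases j <;>
        simp only [Fin.zero_eta, Fin.mk_one, nSq, Pi.add_apply, Pi.smul_apply, Pi.sub_apply,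
          smul_eq_mul] <;>
        field_simp
      · linear_combination (P 1 - A 1) * hcol
      · linear_combination -(P 0 - A 0) * hcol
  · rintro ⟨P, ⟨hPC, hP⟩, τ, hτ, rfl⟩
    refine ⟨⟨P + τ • (P - A), P, (nSq A P)⁻¹⟩, ⟨hPC, ?_, ?_, inv_mul_cancel₀ hP⟩, rfl⟩
    · simp only [nSq, Pi.add_apply, Pi.smul_apply, Pi.sub_apply, smul_eq_mul] at hτ ⊢
      linear_combination hτ
    · simp only [Pi.add_apply, Pi.smul_apply, Pi.sub_apply, smul_eq_mul]
      ring

end Conchoid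

section IsotropicLines

variable {K : Type*} [Field K] {A : Fin 2 → K} {e : K}

def isoLine (A : Fin 2 → K) (e : K) : Set (Fin 2 → K) :=
  {y | (y 0 - A 0) + e * (y 1 - A 1) = 0}

lemma nSq_eq_mul (he : e ^ 2 = -1) (A P : Fin 2 → K) :
    nSq A P = ((P 0 - A 0) + e * (P 1 - A 1)) * ((P 0 - A 0) + -e * (P 1 - A 1)) := by
  rw [nSq]
  linear_combination (P 1 - A 1) ^ 2 * he

lemma nSq_eq_zero_iff (he : e ^ 2 = -1) {P : Fin 2 → K} :
    nSq A P = 0 ↔ P ∈ isoLine A e ∨ P ∈ isoLine A (-e) := by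
  rw [nSq_eq_mul he, mul_eq_zero]
  rfl

lemma nonIso_isoLine (he : e ^ 2 = -1) : nonIso (isoLine A e) A = ∅ :=
  eq_empty_of_forall_notMem fun _ hP => hP.2 ((nSq_eq_zero_iff he).mpr (Or.inl hP.1))

lemma isClosed_isoLine (A : Fin 2 → K) (e : K) : IsClosed (isoLine A e) := by
  convert isClosed_setOf_eval_eq_zero
    (X 0 - C (A 0) + C e * (X 1 - C (A 1)) : MvPolynomial (Fin 2) K)
  simp [isoLine]

lemma IsIrreducible.subset_isoLine_or (he : e ^ 2 = -1) {M : Set (Fin 2 → K)}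
    (hM : IsIrreducible M) (hiso : nonIso M A = ∅) :
    M ⊆ isoLine A e ∨ M ⊆ isoLine A (-e) :=
  isPreirreducible_iff_isClosed_union_isClosed.mp hM.2 _ _ (isClosed_isoLine A e)
    (isClosed_isoLine A (-e)) fun P hP =>
      (nSq_eq_zero_iff he).mp (not_not.mp fun h => (hiso ▸ notMem_empty P) ⟨hP, h⟩)

variable {C : Set (Fin 2 → K)} {d : K}

lemma eq_of_mem_conchoidPoints_of_mem_isoLine (he : e ^ 2 = -1) {Q : Fin 2 → K}
    (hQ : Q ∈ conchoidPoints C A d) (hQe : Q ∈ isoLine A e) : Q = A := by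
  obtain ⟨P, ⟨-, hP⟩, τ, -, rfl⟩ := mem_conchoidPoints_iff.mp hQ
  have hPe : (P 0 - A 0) + e * (P 1 - A 1) ≠ 0 := left_ne_zero_of_mul (nSq_eq_mul he A P ▸ hP)
  have hτ : (1 + τ) * ((P 0 - A 0) + e * (P 1 - A 1)) = 0 := by
    simp only [isoLine, mem_ofPred_eq, Pi.add_apply, Pi.smul_apply, Pi.sub_apply,
      smul_eq_mul] at hQe
    linear_combination hQe
  rw [add_smul_sub_eq_iff]
  exact Or.inl (eq_neg_of_add_eq_zero_right ((mul_eq_zero.mp hτ).resolve_right hPe))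

lemma exists_nSq_eq_sq_of_focus_mem_conchoidPoints (hA : A ∈ conchoidPoints C A d) :
    ∃ P ∈ C, nSq A P = d ^ 2 := by
  obtain ⟨P, ⟨hPC, hP⟩, τ, hτ, hPA⟩ := mem_conchoidPoints_iff.mp hA
  obtain rfl : τ = -1 := (add_smul_sub_eq_iff.mp hPA.symm).resolve_right (ne_of_nSq_ne_zero hP)
  exact ⟨P, hPC, by linear_combination hτ⟩

end IsotropicLines

section Focus

variable {K : Type*} [Field K] {A : Fin 2 → K} {d : K}

noncomputable def focusElim (A : Fin 2 → K) (d : K) (h : MvPolynomial (Fin 2) K) :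
    MvPolynomial (Fin 2) K :=
  (radialPoly A h).evenPartHomog (C (d ^ 2)) (nSqPoly A)

lemma two_mul_eval_focusElim (h : MvPolynomial (Fin 2) K) {P : Fin 2 → K} {τ : K}
    (hτ : τ ^ 2 * nSq A P = d ^ 2) :
    2 * eval P (focusElim A d h) = nSq A P ^ (radialPoly A h).natDegree *
      (eval (P + τ • (P - A)) h + eval (P + (-τ) • (P - A)) h) := by
  rw [focusElim, Polynomial.two_mul_map_evenPartHomog (eval P) _ _ _ (τ := τ)
    (by simpa using hτ), eval_nSqPoly, eval₂_radialPoly, eval₂_radialPoly]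

lemma curveOf_eq_of_associated {f g : MvPolynomial (Fin 2) K} (hfg : Associated f g) :
    curveOf f = curveOf g := by
  obtain ⟨u, rfl⟩ := hfg
  ext x
  simp [curveOf, (u.isUnit.map (eval x)).ne_zero]

lemma circleAt_eq_curveOf (A : Fin 2 → K) (r : K) :
    circleAt A r = curveOf (nSqPoly A - C (r ^ 2)) := by
  ext x
  simp [circleAt, curveOf, sub_eq_zero]

variable [IsAlgClosed K] [NeZero (2 : K)]

lemma focus_mem_closure_conchoidPoints_diff {f : MvPolynomial (Fin 2) K} (hf : Irreducible f)
    (hd : d ≠ 0) (h0 : (nonIso (curveOf f) A).Nonempty)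
    (hC : ¬ ∃ r : K, curveOf f = circleAt A r) {P₀ : Fin 2 → K} (hP₀ : P₀ ∈ curveOf f)
    (hP₀d : nSq A P₀ = d ^ 2) :
    A ∈ closure (conchoidPoints (curveOf f) A d \ {A}) := by
  rw [← zarClosure_eq_closure]
  intro h hh
  have hgen : ∀ P ∈ nonIso (curveOf f) A, ∀ τ : K, τ ^ 2 * nSq A P = d ^ 2 → τ ≠ -1 →
      eval (P + τ • (P - A)) h = 0 := fun P hP τ hτ hτ1 =>
    hh _ ⟨mem_conchoidPoints_iff.mpr ⟨P, hP, τ, hτ, rfl⟩,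
      fun hA => (add_smul_sub_eq_iff.mp hA).elim hτ1 (ne_of_nSq_ne_zero hP.2)⟩
  -- over the points of `C` with `nSq A P ∉ {0, d²}`, both points generated by `P` avoid `A`
  have hvan : ∀ P, eval P f = 0 →
      eval P (focusElim A d h * nSqPoly A * (nSqPoly A - C (d ^ 2))) = 0 := by
    intro P hP
    simp only [map_mul, map_sub, eval_nSqPoly, eval_C]
    by_cases hP0 : nSq A P = 0
    · simp [hP0]
    by_cases hPd : nSq A P = d ^ 2
    · simp [hPd]
    obtain ⟨τ, hτ⟩ := IsAlgClosed.exists_pow_nat_eq (d ^ 2 / nSq A P) two_pos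
    have hτ' : τ ^ 2 * nSq A P = d ^ 2 := by rw [hτ, div_mul_cancel₀ _ hP0]
    have hne : ∀ σ : K, σ ^ 2 = τ ^ 2 → σ ≠ -1 := by
      rintro σ hσ rfl
      exact hPd (by rw [← hτ', ← hσ]; ring)
    have hE := two_mul_eval_focusElim h hτ'
    rw [hgen P ⟨hP, hP0⟩ τ hτ' (hne τ rfl), hgen P ⟨hP, hP0⟩ (-τ) (by rwa [neg_sq])
      (hne (-τ) (neg_sq τ)), add_zero, mul_zero, mul_eq_zero] at hE
    simp [hE.resolve_left two_ne_zero]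
  have hfg : ¬ f ∣ nSqPoly A := by
    rintro ⟨k, hk⟩
    obtain ⟨P, hP, hP0⟩ := h0
    exact hP0 (by rw [← eval_nSqPoly, hk, map_mul, show eval P f = 0 from hP, zero_mul])
  have hfc : ¬ f ∣ nSqPoly A - C (d ^ 2) := by
    obtain ⟨i, hi⟩ := IsAlgClosed.exists_pow_nat_eq (-1 : K) two_pos
    refine fun hdvd => hC ⟨d, ?_⟩
    rw [circleAt_eq_curveOf]
    exact curveOf_eq_of_associated
      (hf.associated_of_dvd (irreducible_nSqPoly_sub_C A hi (pow_ne_zero 2 hd)) hdvd)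
  have hE : eval P₀ (focusElim A d h) = 0 := by
    obtain ⟨k, hk⟩ := ((hf.prime.dvd_or_dvd ((hf.prime.dvd_or_dvd
      (hf.dvd_of_forall_eval_eq_zero hvan)).resolve_right hfc)).resolve_right hfg)
    rw [hk, map_mul, show eval P₀ f = 0 from hP₀, zero_mul]
  -- at `P₀` the two generated points are `2 P₀ - A` and the focus itself
  have hτ₁ : (1 : K) ^ 2 * nSq A P₀ = d ^ 2 := by rw [one_pow, one_mul, hP₀d]
  have hsum := two_mul_eval_focusElim h hτ₁
  rw [hE, hgen P₀ ⟨hP₀, by rw [hP₀d]; exact pow_ne_zero 2 hd⟩ 1 hτ₁ ?_,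
    show P₀ + (-1 : K) • (P₀ - A) = A by module, zero_add, mul_zero, eq_comm,
    mul_eq_zero] at hsum
  · exact hsum.resolve_left (pow_ne_zero _ (hP₀d ▸ pow_ne_zero 2 hd))
  · exact fun h1 => two_ne_zero (by linear_combination h1 : (2 : K) = 0)

end Focus

theorem stmt12 {K : Type*} [Field K] [IsAlgClosed K] [CharZero K]
    (f : MvPolynomial (Fin 2) K) (hf : Irreducible f)
    (A : Fin 2 → K) (d : K) (hd : d ≠ 0)
    (h0 : (nonIso (curveOf f) A).Nonempty)
    (hC : ¬ ∃ r : K, curveOf f = circleAt A r)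
    (M : Set (Fin 2 → K)) (hM : IsCompOf M (conchoid (curveOf f) A d)) :
    (nonIso M A).Nonempty ∧
    ∀ i : K, i ^ 2 = -1 →
      M ≠ {y : Fin 2 → K | (y 0 - A 0) + i * (y 1 - A 1) = 0} ∧
      M ≠ {y : Fin 2 → K | (y 0 - A 0) - i * (y 1 - A 1) = 0} := by
  obtain ⟨hMirr, -, hMS, hmax⟩ := hM
  rw [conchoid_eq_closure] at hMS hmax
  have hM₀ : (nonIso M A).Nonempty := by
    rw [nonempty_iff_ne_empty]
    intro hiso
    obtain ⟨i, hi⟩ := IsAlgClosed.exists_pow_nat_eq (-1 : K) two_pos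
    obtain ⟨e, he, hMe⟩ : ∃ e : K, e ^ 2 = -1 ∧ M ⊆ isoLine A e :=
      (hMirr.subset_isoLine_or hi hiso).elim (⟨i, hi, ·⟩) (⟨-i, by rwa [neg_sq], ·⟩)
    obtain ⟨hMA, hAS⟩ := eq_singleton_of_maximal_of_inter_subset hMirr hMS hmax
      fun Q hQ => eq_of_mem_conchoidPoints_of_mem_isoLine he hQ.1 (hMe hQ.2)
    obtain ⟨P₀, hP₀, hP₀d⟩ := exists_nSq_eq_sq_of_focus_mem_conchoidPoints hAS
    refine not_subset_closure_diff_of_maximal hMirr hmax ?_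
    rw [hMA, singleton_subset_iff]
    exact focus_mem_closure_conchoidPoints_diff hf hd h0 hC hP₀ hP₀d
  have hline : ∀ e : K, e ^ 2 = -1 → M ≠ isoLine A e := by
    rintro e he rfl
    exact hM₀.ne_empty (nonIso_isoLine he)
  refine ⟨hM₀, fun i hi => ⟨hline i hi, ?_⟩⟩
  convert hline (-i) (by rwa [neg_sq]) using 1
  ext y
  simp [isoLine, sub_eq_add_neg]
end
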